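/- Let X be a symmetric set, set X^(0) = X and X^(i+1) = (X^(i))^♭ for i ≥ 0, and let X^(∞) be the colimit of the resulting sequence of quotient maps X^(0) → X^(1) → X^(2) → ⋯. Then X^(∞) is a spiny symmetric set. Consequently, the full subcategory of spiny symmetric sets is a reflective subcategory of the category of symmetric sets, with reflection arrow X → X^(∞): for every spiny symmetric set U, precomposition with X → X^(∞) gives a bijection Hom(X^(∞), U) → Hom(X, U). -/

import Mathlib

/-- A (skeletal) simplicial set: a contravariant functor on the simplex category,
with `obj n` the set of `n`-simplices and `map α` the action of an
order-preserving map `α : [m] → [n]`. -/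
structure SSet' where
  obj : ℕ → Type
  map : ∀ {m n : ℕ}, (Fin (m + 1) →o Fin (n + 1)) → obj n → obj m
  map_id : ∀ (n : ℕ) (x : obj n), map OrderHom.id x = x
  map_comp : ∀ {k m n : ℕ} (α : Fin (k + 1) →o Fin (m + 1)) (β : Fin (m + 1) →o Fin (n + 1))
      (x : obj n), map (β.comp α) x = map α (map β x)

/-- The order-preserving map `ρ_{ij} : [1] → [n]`, `0 ↦ i`, `1 ↦ j` (for `i ≤ j`). -/
def rho {n : ℕ} (i j : Fin (n + 1)) (h : i ≤ j) : Fin 2 →o Fin (n + 1) where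
  toFun := ![i, j]
  monotone' := by
    intro a b hab
    fin_cases a <;> fin_cases b <;> simp_all

/-- The `k`-th edge `ρ_{k,k+1}^*(x)` of an `n`-simplex. -/
def SSet'.edge (X : SSet') {n : ℕ} (x : X.obj n) (k : Fin n) : X.obj 1 :=
  X.map (rho k.castSucc k.succ (Fin.castSucc_lt_succ (i := k)).le) x

/-- A simplicial set is edgy if each simplex is determined by its string of edges. -/
def SSet'.IsEdgy (X : SSet') : Prop :=
  ∀ n : ℕ, 1 ≤ n → Function.Injective fun (x : X.obj n) (k : Fin n) => X.edge x k

/-- Conjugation of an order-preserving map by the flips `τ`. -/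
def conj {m n : ℕ} (α : Fin (m + 1) →o Fin (n + 1)) : Fin (m + 1) →o Fin (n + 1) where
  toFun k := (α k.rev).rev
  monotone' := by
    intro a b hab
    exact Fin.rev_le_rev.mpr (α.monotone (Fin.rev_le_rev.mpr hab))

/-- An anti-involution on a simplicial set `X`, i.e. a simplicial map
`ν : X^op → X` with `ν^op ∘ ν = id`, described levelwise.  Naturality of
`ν : X^op → X` amounts to `ν (X(τ∘α∘τ) x) = X(α) (ν x)`. -/
structure AntiInvolution (X : SSet') where
  app : ∀ n : ℕ, X.obj n → X.obj n
  naturality : ∀ {m n : ℕ} (α : Fin (m + 1) →o Fin (n + 1)) (x : X.obj n),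
    app m (X.map (conj α) x) = X.map α (app n x)
  involutive : ∀ (n : ℕ) (x : X.obj n), app n (app n x) = x

/-- The constant map `[1] → [n]` at the last vertex, i.e. `s_0 ∘ (d_0)^n`. -/
def lastConst (n : ℕ) : Fin 2 →o Fin (n + 1) := ⟨fun _ => Fin.last n, monotone_const⟩

/-- `LSpec X ν x y` says that `y ∈ X_{2n}` has the edge string
`[f_n† | ⋯ | f_1† | f_1 | ⋯ | f_n]`, where `[f_1 | ⋯ | f_n]` is the edge string of
`x ∈ X_n`, and that the total composite `ρ_{0,2n}^*(y)` is the identity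
`s_0(d_0^n x)` on the last vertex of `x`. -/
def LSpec (X : SSet') (ν : AntiInvolution X) {n : ℕ} (x : X.obj n) (y : X.obj (n + n)) : Prop :=
  (∀ k : Fin (n + n), X.edge y k =
      if h : (k : ℕ) < n then ν.app 1 (X.edge x ⟨n - 1 - (k : ℕ), by omega⟩)
      else X.edge x ⟨(k : ℕ) - n, by have := k.isLt; omega⟩) ∧
  X.map (rho 0 (Fin.last (n + n)) (Fin.zero_le _)) y = X.map (lastConst n) x

/-- A partial groupoid structure on a simplicial set: it is edgy, has an
anti-involution which is the identity on vertices, and has operators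
`L : X_n → X_{2n}` with `L[f_1|⋯|f_n] = [f_n†|⋯|f_1†|f_1|⋯|f_n]` whose total
composite is an identity. -/
structure PartialGroupoidStruct (X : SSet') where
  edgy : X.IsEdgy
  inv : AntiInvolution X
  inv_zero : ∀ x : X.obj 0, inv.app 0 x = x
  L : ∀ {n : ℕ}, X.obj n → X.obj (n + n)
  L_spec : ∀ {n : ℕ}, 1 ≤ n → ∀ x : X.obj n, LSpec X inv x (L x)

/-- The Prop-valued version: `X` together with the anti-involution `ν` is a
partial groupoid. -/
def IsPartialGroupoid (X : SSet') (ν : AntiInvolution X) : Prop :=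
  X.IsEdgy ∧ (∀ v : X.obj 0, ν.app 0 v = v) ∧
    ∀ n : ℕ, 1 ≤ n → ∀ x : X.obj n, ∃ y : X.obj (n + n), LSpec X ν x y

/-- The matrix form of an `n`-simplex: `x_{ij} = ρ_{ij}^*(x)` for `i ≤ j`, and
`x_{ji} = (x_{ij})†`. -/
def matrixForm (X : SSet') (ν : AntiInvolution X) {n : ℕ} (x : X.obj n) (i j : Fin (n + 1)) :
    X.obj 1 :=
  if h : i ≤ j then X.map (rho i j h) x
  else ν.app 1 (X.map (rho j i (le_of_not_ge h)) x)

/-- The fold map `χ_n : [2n] → [n]`, `i ↦ |n - i|`. -/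
def chi (n : ℕ) (i : Fin (n + n + 1)) : Fin (n + 1) :=
  ⟨max n (i : ℕ) - min n (i : ℕ), by have := i.isLt; omega⟩

/-- A map of simplicial sets. -/
structure SSetHom (X Y : SSet') where
  app : ∀ n : ℕ, X.obj n → Y.obj n
  naturality : ∀ {m n : ℕ} (α : Fin (m + 1) →o Fin (n + 1)) (x : X.obj n),
    app m (X.map α x) = Y.map α (app n x)
/-- A symmetric (simplicial) set: a contravariant functor on the category `Υ`
of the sets `[n]` and arbitrary functions. -/
structure SymSet where
  obj : ℕ → Type
  map : ∀ {m n : ℕ}, (Fin (m + 1) → Fin (n + 1)) → obj n → obj m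
  map_id : ∀ (n : ℕ) (x : obj n), map id x = x
  map_comp : ∀ {k m n : ℕ} (φ : Fin (k + 1) → Fin (m + 1)) (ψ : Fin (m + 1) → Fin (n + 1))
      (x : obj n), map (ψ ∘ φ) x = map φ (map ψ x)

/-- Restriction `J^*` of a symmetric set along the inclusion `J : Δ → Υ`. -/
def SymSet.restrict (Z : SymSet) : SSet' where
  obj := Z.obj
  map α x := Z.map (⇑α) x
  map_id n x := Z.map_id n x
  map_comp α β x := Z.map_comp (⇑α) (⇑β) x

/-- A map of symmetric sets. -/
structure SymSetHom (Y Z : SymSet) where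
  app : ∀ n : ℕ, Y.obj n → Z.obj n
  naturality : ∀ {m n : ℕ} (φ : Fin (m + 1) → Fin (n + 1)) (x : Y.obj n),
    app m (Y.map φ x) = Z.map φ (app n x)

/-- The identity map of symmetric sets. -/
def SymSetHom.id (X : SymSet) : SymSetHom X X where
  app _ x := x
  naturality _ _ := rfl

/-- Composition of maps of symmetric sets. -/
def SymSetHom.comp {X Y Z : SymSet} (G : SymSetHom Y Z) (F : SymSetHom X Y) : SymSetHom X Z where
  app n x := G.app n (F.app n x)
  naturality φ x := by rw [F.naturality, G.naturality]

/-- Restriction `J^*` of a map of symmetric sets. -/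
def SymSetHom.restrict {Y Z : SymSet} (G : SymSetHom Y Z) : SSetHom Y.restrict Z.restrict where
  app := G.app
  naturality α x := G.naturality (⇑α) x

/-- The `k`-th edge `ρ_{k,k+1}^*(x)` of an `n`-simplex of a symmetric set. -/
def SymSet.edge (X : SymSet) {n : ℕ} (x : X.obj n) (k : Fin n) : X.obj 1 :=
  X.map (fun t : Fin 2 => if t = 0 then k.castSucc else k.succ) x

/-- A symmetric set is spiny if each simplex is determined by its string of
edges, i.e. `ℰ_n : X_n → ∏_{i=1}^n X_1` is injective for `n ≥ 1`. -/
def SymSet.Spiny (X : SymSet) : Prop :=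
  ∀ n : ℕ, 1 ≤ n → Function.Injective fun (x : X.obj n) (k : Fin n) => X.edge x k

/-- `ℰ_m(x) = ℰ_m(y)`, where `ℰ_0` is the identity of `X_0` and for `m ≥ 1`,
`ℰ_m` is the string-of-edges map. -/
def SymSet.ECond (X : SymSet) {m : ℕ} (x y : X.obj m) : Prop :=
  (m = 0 → x = y) ∧ ∀ k : Fin m, X.edge x k = X.edge y k

/-- The relation `≈` on `X_n`: `x ≈ x′` iff there are `φ : [n] → [m]` and
`x̃, x̃′ ∈ X_m` with `ℰ_m(x̃) = ℰ_m(x̃′)`, `φ^* x̃ = x` and `φ^* x̃′ = x′`. -/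
def SymSet.approx (X : SymSet) {n : ℕ} (x y : X.obj n) : Prop :=
  ∃ (m : ℕ) (φ : Fin (n + 1) → Fin (m + 1)) (xt yt : X.obj m),
    X.ECond xt yt ∧ X.map φ xt = x ∧ X.map φ yt = y

/-- The equivalence relation `∼` generated by `≈`, as a setoid. -/
def SymSet.flatSetoid (X : SymSet) (n : ℕ) : Setoid (X.obj n) :=
  Relation.EqvGen.setoid (fun x y => X.approx x y)

theorem SymSet.approx_map (X : SymSet) {k n : ℕ} (ψ : Fin (k + 1) → Fin (n + 1))
    {x y : X.obj n} (h : X.approx x y) : X.approx (X.map ψ x) (X.map ψ y) := by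
  obtain ⟨m, φ, xt, yt, hE, hx, hy⟩ := h
  exact ⟨m, φ ∘ ψ, xt, yt, hE, by rw [X.map_comp, hx], by rw [X.map_comp, hy]⟩

theorem SymSet.eqvGen_map (X : SymSet) {k n : ℕ} (ψ : Fin (k + 1) → Fin (n + 1))
    {x y : X.obj n} (h : Relation.EqvGen (fun a b => X.approx a b) x y) :
    Relation.EqvGen (fun a b => X.approx a b) (X.map ψ x) (X.map ψ y) := by
  induction h with
  | rel a b hab => exact Relation.EqvGen.rel _ _ (X.approx_map ψ hab)
  | refl a => exact Relation.EqvGen.refl _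
  | symm a b _ ih => exact Relation.EqvGen.symm _ _ ih
  | trans a b c _ _ ih1 ih2 => exact Relation.EqvGen.trans _ _ _ ih1 ih2

/-- The quotient `X^♭` of `X` by the equivalence relation `∼` generated by `≈`. -/
def SymSet.flat (X : SymSet) : SymSet where
  obj n := Quotient (X.flatSetoid n)
  map φ := Quotient.map (X.map φ) (fun _ _ h => X.eqvGen_map φ h)
  map_id n x := by
    induction x using Quotient.ind
    exact congrArg (Quotient.mk _) (X.map_id n _)
  map_comp φ ψ x := by
    induction x using Quotient.ind
    exact congrArg (Quotient.mk _) (X.map_comp φ ψ _)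

/-- The quotient map `X → X^♭`. -/
def SymSet.flatProj (X : SymSet) : SymSetHom X X.flat where
  app _ x := Quotient.mk _ x
  naturality _ _ := rfl

/-- The tower `X^{(0)} = X`, `X^{(i+1)} = (X^{(i)})^♭`. -/
def SymSet.iterFlat (X : SymSet) : ℕ → SymSet
  | 0 => X
  | i + 1 => (X.iterFlat i).flat

/-- The canonical map `X = X^{(0)} → X^{(i)}` in the tower of quotients. -/
def SymSet.stage (X : SymSet) : ∀ i : ℕ, SymSetHom X (X.iterFlat i)
  | 0 => SymSetHom.id X
  | i + 1 => ((X.iterFlat i).flatProj).comp (X.stage i)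

theorem SymSet.stage_mono (X : SymSet) (n i k : ℕ) (x y : X.obj n)
    (h : (X.stage i).app n x = (X.stage i).app n y) :
    (X.stage (i + k)).app n x = (X.stage (i + k)).app n y := by
  induction k with
  | zero => exact h
  | succ k ih => exact congrArg ((X.iterFlat (i + k)).flatProj.app n) ih

/-- The colimit `X^{(∞)}` of the tower `X → X^{(1)} → X^{(2)} → ⋯`: since all
the maps in the tower are surjective quotient maps, it is the quotient of `X`
identifying two simplices as soon as they agree at some finite stage. -/
def SymSet.infSetoid (X : SymSet) (n : ℕ) : Setoid (X.obj n) where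
  r x y := ∃ i, (X.stage i).app n x = (X.stage i).app n y
  iseqv := by
    refine ⟨fun x => ⟨0, rfl⟩, fun ⟨i, h⟩ => ⟨i, h.symm⟩, ?_⟩
    rintro x y z ⟨i, hi⟩ ⟨j, hj⟩
    refine ⟨i + j, ?_⟩
    have h1 := X.stage_mono n i j x y hi
    have h2 := X.stage_mono n j i y z hj
    rw [Nat.add_comm j i] at h2
    exact h1.trans h2

/-- `X^{(∞)}`, realized as the levelwise quotient of `X` by the kernels of the
tower maps. -/
def SymSet.symInf (X : SymSet) : SymSet where
  obj n := Quotient (X.infSetoid n)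
  map φ := Quotient.map (X.map φ) (by
    rintro x y ⟨i, h⟩
    exact ⟨i, by rw [(X.stage i).naturality, (X.stage i).naturality, h]⟩)
  map_id n x := by
    induction x using Quotient.ind
    exact congrArg (Quotient.mk _) (X.map_id n _)
  map_comp φ ψ x := by
    induction x using Quotient.ind
    exact congrArg (Quotient.mk _) (X.map_comp φ ψ _)

/-- The reflection arrow `X → X^{(∞)}`. -/
def SymSet.infProj (X : SymSet) : SymSetHom X X.symInf where
  app _ x := Quotient.mk _ x
  naturality _ _ := rfl


/-! Maps into a spiny `U` cannot distinguish simplices with the same edge string, so they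
descend through every quotient `Y → Y^♭`, hence through the whole tower and its colimit
`X^{(∞)}`. Conversely, if two simplices of `X^{(∞)}` have the same edges, then finitely many
edge identifications already hold at some finite stage `X^{(N)}`; there the two simplices are
`≈`-related, so they are identified in `X^{(N+1)}`. -/

open Filter

namespace SymSetHom

theorem ext {Y Z : SymSet} {F G : SymSetHom Y Z} (h : F.app = G.app) : F = G := by
  cases F; cases G; cases h; rfl

theorem app_edge {Y Z : SymSet} (F : SymSetHom Y Z) {n : ℕ} (x : Y.obj n) (k : Fin n) :
    F.app 1 (Y.edge x k) = Z.edge (F.app n x) k :=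
  F.naturality _ x

variable {Y U : SymSet}

theorem app_eq_of_approx (hU : U.Spiny) (F : SymSetHom Y U) {n : ℕ} {x y : Y.obj n}
    (h : Y.approx x y) : F.app n x = F.app n y := by
  obtain ⟨m, φ, xt, yt, ⟨h0, hedge⟩, rfl, rfl⟩ := h
  have hxy : F.app m xt = F.app m yt := by
    rcases Nat.eq_zero_or_pos m with rfl | hm
    · rw [h0 rfl]
    · exact hU m hm (funext fun k => by simp only [← F.app_edge, hedge k])
  rw [F.naturality, F.naturality, hxy]

theorem app_eq_of_eqvGen_approx (hU : U.Spiny) (F : SymSetHom Y U) {n : ℕ} {x y : Y.obj n}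
    (h : Relation.EqvGen (fun a b => Y.approx a b) x y) : F.app n x = F.app n y := by
  induction h with
  | rel a b hab => exact F.app_eq_of_approx hU hab
  | refl a => rfl
  | symm a b _ ih => exact ih.symm
  | trans a b c _ _ ih₁ ih₂ => exact ih₁.trans ih₂

def flatLift (hU : U.Spiny) (F : SymSetHom Y U) : SymSetHom Y.flat U where
  app n := Quotient.lift (F.app n) fun _ _ h => F.app_eq_of_eqvGen_approx hU h
  naturality φ x := by
    induction x using Quotient.ind
    exact F.naturality φ _

end SymSetHom

namespace SymSet

theorem flatProj_app_eq_of_edge_eq (Y : SymSet) {n : ℕ} (hn : 1 ≤ n) {x y : Y.obj n}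
    (h : ∀ k : Fin n, Y.edge x k = Y.edge y k) : Y.flatProj.app n x = Y.flatProj.app n y :=
  Quotient.sound <| .rel _ _
    ⟨n, id, x, y, ⟨fun _ => by omega, h⟩, Y.map_id n x, Y.map_id n y⟩

variable (X : SymSet)

theorem stage_app_eq_of_le {n i j : ℕ} (hij : i ≤ j) {x y : X.obj n}
    (h : (X.stage i).app n x = (X.stage i).app n y) :
    (X.stage j).app n x = (X.stage j).app n y := by
  obtain ⟨k, rfl⟩ := Nat.exists_eq_add_of_le hij
  exact X.stage_mono n i k x y h

theorem infProj_app_eq_iff {n : ℕ} {x y : X.obj n} :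
    X.infProj.app n x = X.infProj.app n y ↔
      ∀ᶠ i in atTop, (X.stage i).app n x = (X.stage i).app n y :=
  Quotient.eq.trans ⟨fun ⟨i, h⟩ => eventually_atTop.2 ⟨i, fun _ hij =>
    X.stage_app_eq_of_le hij h⟩, fun h => h.exists⟩

theorem symInf_spiny : X.symInf.Spiny := by
  intro n hn a b h
  induction a using Quotient.ind with | _ a =>
  induction b using Quotient.ind with | _ b =>
  have hedge (k : Fin n) : ∀ᶠ i in atTop,
      (X.stage i).app 1 (X.edge a k) = (X.stage i).app 1 (X.edge b k) :=
    X.infProj_app_eq_iff.1 (congrFun h k)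
  obtain ⟨N, hN⟩ := (eventually_all.2 hedge).exists
  refine Quotient.sound ⟨N + 1, (X.iterFlat N).flatProj_app_eq_of_edge_eq hn fun k => ?_⟩
  simpa only [SymSetHom.app_edge] using hN k

variable {X} {U : SymSet}

def iterFlatLift (hU : U.Spiny) (F : SymSetHom X U) : ∀ i : ℕ, SymSetHom (X.iterFlat i) U
  | 0 => F
  | i + 1 => (iterFlatLift hU F i).flatLift hU

theorem iterFlatLift_app_stage (hU : U.Spiny) (F : SymSetHom X U) (i n : ℕ) (x : X.obj n) :
    (iterFlatLift hU F i).app n ((X.stage i).app n x) = F.app n x := by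
  induction i with
  | zero => rfl
  | succ i ih => exact ih

def infLift (hU : U.Spiny) (F : SymSetHom X U) : SymSetHom X.symInf U where
  app n := Quotient.lift (F.app n) fun x y ⟨i, h⟩ => by
    rw [← iterFlatLift_app_stage hU F i n x, ← iterFlatLift_app_stage hU F i n y, h]
  naturality φ x := by
    induction x using Quotient.ind
    exact F.naturality φ _

theorem infLift_comp_infProj (hU : U.Spiny) (F : SymSetHom X U) :
    (infLift hU F).comp X.infProj = F :=
  SymSetHom.ext rfl

theorem comp_infProj_injective :
    Function.Injective fun G : SymSetHom X.symInf U => G.comp X.infProj := by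
  intro G G' h
  refine SymSetHom.ext (funext fun n => funext fun x => ?_)
  induction x using Quotient.ind with | _ x =>
  exact congrFun (congrFun (congrArg SymSetHom.app h) n) x

end SymSet

/-- The colimit `X^{(∞)}` of the tower of quotients
`X → X^♭ → (X^♭)^♭ → ⋯` is a spiny symmetric set, and for every spiny symmetric
set `U`, precomposition with `X → X^{(∞)}` is a bijection
`Hom(X^{(∞)}, U) → Hom(X, U)`; hence the spiny symmetric sets form a reflective
subcategory of symmetric sets, with reflection `X ↦ X^{(∞)}`. -/
theorem symInf_spiny_reflection (X : SymSet) :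
    X.symInf.Spiny ∧
    ∀ U : SymSet, U.Spiny →
      Function.Bijective fun G : SymSetHom X.symInf U => G.comp X.infProj :=
  ⟨X.symInf_spiny, fun _ hU =>
    ⟨SymSet.comp_infProj_injective,
      fun F => ⟨SymSet.infLift hU F, SymSet.infLift_comp_infProj hU F⟩⟩⟩
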